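/- Let f ∈ ℝ[ω₁,…,ω_k] be a k-fold invariant of SO(3), i.e. f(Aω₁,…,Aω_k) = f(ω₁,…,ω_k) for all A with A·Aᵀ = I and det A = 1, where each ωᵢ ∈ ℝ³. Define the dualisation f̂ on k-tuples of dual vectors ûᵢ = ωᵢ + ε·vᵢ ∈ 𝔻³ by f̂(û₁,…,û_k) = f(ω₁,…,ω_k) + ε·Σ_{i=1}^{k} ∇_{ωᵢ}f(ω₁,…,ω_k)·vᵢ. Then for every dual matrix Â = A₀ + ε·A₁ with Â·Âᵀ = I and det Â = 1 over 𝔻, one has f̂(Â·û₁, …, Â·û_k) = f̂(û₁,…,û_k). -/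

import Mathlib

open Matrix MvPolynomial

/-- The dual matrix `Â = A₀ + ε·A₁` over the dual numbers `𝔻 = ℝ[ε]/(ε²)`. -/
noncomputable def dualMat (A₀ A₁ : Matrix (Fin 3) (Fin 3) ℝ) :
    Matrix (Fin 3) (Fin 3) (DualNumber ℝ) :=
  A₀.map (algebraMap ℝ (DualNumber ℝ)) +
    (DualNumber.eps : DualNumber ℝ) • A₁.map (algebraMap ℝ (DualNumber ℝ))

/-- The dualisation `f̂` of a polynomial `f` in `k` vector arguments, evaluated at the
`k`-tuple of dual vectors `ûᵢ = ωᵢ + ε·vᵢ`: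
`f̂(û₁,…,û_k) = f(ω₁,…,ω_k) + ε·Σᵢ ∇_{ωᵢ}f(ω₁,…,ω_k)·vᵢ`. -/
noncomputable def fhat {k : ℕ} (f : MvPolynomial (Fin k × Fin 3) ℝ)
    (ω v : Fin k → Fin 3 → ℝ) : DualNumber ℝ :=
  algebraMap ℝ (DualNumber ℝ) (MvPolynomial.eval (fun p => ω p.1 p.2) f) +
    DualNumber.eps *
      algebraMap ℝ (DualNumber ℝ)
        (∑ i : Fin k, ∑ r : Fin 3,
          MvPolynomial.eval (fun p => ω p.1 p.2) (MvPolynomial.pderiv (i, r) f) * v i r)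

/-!
Write `Â = (1 + ε M) A₀` with `M = A₁ A₀ᵀ`. Comparing primal and dual parts, `Â Âᵀ = 1` and
`det Â = 1` say exactly that `A₀ ∈ SO(3)` and that `M` is skew-symmetric. The primal part of `f̂`
is then invariant because `A₀ ∈ SO(3)`. In the dual part, differentiating
`f(A₀(ω + t v)) = f(ω + t v)` at `t = 0` takes care of the terms `A₀ vᵢ`, and differentiating
`f(exp(t M) ω) = f(ω)` at `t = 0`, where `exp(t M) ∈ SO(3)`, shows that the terms `M A₀ ωᵢ`
contribute nothing.
-/

namespace MvPolynomial

variable {R σ : Type*} [CommSemiring R] [Fintype σ]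

noncomputable def dirDeriv (f : MvPolynomial σ R) (x y : σ → R) : R :=
  ∑ s, eval x (pderiv s f) * y s

@[simp]
theorem dirDeriv_C (a : R) (x y : σ → R) : dirDeriv (C a) x y = 0 := by
  simp [dirDeriv]

@[simp]
theorem dirDeriv_X [DecidableEq σ] (s : σ) (x y : σ → R) : dirDeriv (X s) x y = y s := by
  simp [dirDeriv, pderiv_X, Pi.single_apply]

theorem dirDeriv_add (p q : MvPolynomial σ R) (x y : σ → R) :
    dirDeriv (p + q) x y = dirDeriv p x y + dirDeriv q x y := by
  simp [dirDeriv, add_mul, Finset.sum_add_distrib]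

theorem dirDeriv_mul (p q : MvPolynomial σ R) (x y : σ → R) :
    dirDeriv (p * q) x y = dirDeriv p x y * eval x q + eval x p * dirDeriv q x y := by
  simp only [dirDeriv, pderiv_mul, map_add, map_mul, add_mul, Finset.sum_add_distrib,
    Finset.sum_mul, Finset.mul_sum]
  congr 1 <;> exact Finset.sum_congr rfl fun s _ => by ring

@[simp]
theorem dirDeriv_zero_right (f : MvPolynomial σ R) (x : σ → R) : dirDeriv f x 0 = 0 := by
  simp [dirDeriv]

theorem dirDeriv_add_right (f : MvPolynomial σ R) (x y z : σ → R) :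
    dirDeriv f x (y + z) = dirDeriv f x y + dirDeriv f x z := by
  simp [dirDeriv, mul_add, Finset.sum_add_distrib]

variable {𝕜 : Type*} [NontriviallyNormedField 𝕜]

theorem hasDerivAt_eval_comp (f : MvPolynomial σ 𝕜) {φ : 𝕜 → σ → 𝕜} {φ' : σ → 𝕜} {t : 𝕜}
    (hφ : HasDerivAt φ φ' t) :
    HasDerivAt (fun u => eval (φ u) f) (dirDeriv f (φ t) φ') t := by
  classical
  induction f using MvPolynomial.induction_on with
  | C a => simpa using hasDerivAt_const t a
  | add p q hp hq => simpa [dirDeriv_add] using hp.fun_add hq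
  | mul_X p s hp => simpa [dirDeriv_mul] using hp.fun_mul (hasDerivAt_pi.1 hφ s)

theorem dirDeriv_eq_of_eval_eq (f : MvPolynomial σ 𝕜) {φ ψ : 𝕜 → σ → 𝕜} {φ' ψ' : σ → 𝕜}
    {t : 𝕜} (hφ : HasDerivAt φ φ' t) (hψ : HasDerivAt ψ ψ' t)
    (h : ∀ u, eval (φ u) f = eval (ψ u) f) :
    dirDeriv f (φ t) φ' = dirDeriv f (ψ t) ψ' :=
  (hasDerivAt_eval_comp f hφ).unique <| by simpa only [h] using hasDerivAt_eval_comp f hψ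

end MvPolynomial

namespace Matrix

variable {n : Type*} [Fintype n] [DecidableEq n]

theorem exp_mul_transpose_of_transpose_eq_neg {M : Matrix n n ℝ} (hM : Mᵀ = -M) :
    NormedSpace.exp M * (NormedSpace.exp M)ᵀ = 1 := by
  rw [← exp_transpose, hM, ← Matrix.exp_add_of_commute M (-M) (Commute.refl M).neg_right,
    add_neg_cancel, NormedSpace.exp_zero]

-- `exp M` is a square, so its determinant is nonnegative as well as `±1`.
theorem det_exp_of_transpose_eq_neg {M : Matrix n n ℝ} (hM : Mᵀ = -M) :
    (NormedSpace.exp M).det = 1 := by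
  have hsq : (NormedSpace.exp M).det ^ 2 = 1 := by
    simpa [det_transpose, ← sq] using congrArg det (exp_mul_transpose_of_transpose_eq_neg hM)
  have hnonneg : 0 ≤ (NormedSpace.exp M).det := by
    have : NormedSpace.exp M = NormedSpace.exp ((1 / 2 : ℝ) • M) ^ 2 := by
      rw [← Matrix.exp_nsmul, ← Nat.cast_smul_eq_nsmul ℝ, smul_smul]; norm_num
    rw [this, det_pow]; positivity
  nlinarith

-- Any norm will do to differentiate; `exp` itself does not depend on the choice.
attribute [local instance] Matrix.linftyOpNormedAddCommGroup Matrix.linftyOpNormedSpace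
  Matrix.linftyOpNormedRing Matrix.linftyOpNormedAlgebra in
theorem hasDerivAt_exp_smul_mulVec (M : Matrix n n ℝ) (w : n → ℝ) :
    HasDerivAt (fun t : ℝ => NormedSpace.exp (t • M) *ᵥ w) (M *ᵥ w) 0 := by
  have h := hasDerivAt_exp_smul_const (𝕂 := ℝ) M 0
  rw [zero_smul, NormedSpace.exp_zero, one_mul] at h
  let L : Matrix n n ℝ →L[ℝ] n → ℝ := LinearMap.toContinuousLinearMap
    { toFun := fun A => A *ᵥ w, map_add' := fun A B => add_mulVec A B w,
      map_smul' := fun c A => smul_mulVec c A w }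
  exact L.hasFDerivAt.comp_hasDerivAt 0 h

end Matrix

section SOInvariant

variable {ι n : Type*} [Fintype ι] [Fintype n] [DecidableEq n]

/-- Invariance under the diagonal action of `SO(n)` on `ι`-tuples of vectors; the variable
`(i, r)` of `f` is the `r`-th coordinate of the `i`-th vector. -/
def IsSOInvariant (f : MvPolynomial (ι × n) ℝ) : Prop :=
  ∀ A : Matrix n n ℝ, A * Aᵀ = 1 → A.det = 1 → ∀ ω : ι → n → ℝ,
    eval (Function.uncurry fun i => A *ᵥ ω i) f = eval (Function.uncurry ω) f

variable {f : MvPolynomial (ι × n) ℝ}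

theorem IsSOInvariant.dirDeriv_mulVec (hf : IsSOInvariant f) {A : Matrix n n ℝ}
    (hA : A * Aᵀ = 1) (hdet : A.det = 1) (ω v : ι → n → ℝ) :
    dirDeriv f (Function.uncurry fun i => A *ᵥ ω i) (Function.uncurry fun i => A *ᵥ v i)
      = dirDeriv f (Function.uncurry ω) (Function.uncurry v) := by
  have hline : ∀ x y : ι × n → ℝ, HasDerivAt (fun u : ℝ => x + u • y) y 0 := fun x y => by
    simpa using ((hasDerivAt_id (0 : ℝ)).smul_const y).const_add x
  have h := dirDeriv_eq_of_eval_eq f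
    (hline (Function.uncurry fun i => A *ᵥ ω i) (Function.uncurry fun i => A *ᵥ v i))
    (hline (Function.uncurry ω) (Function.uncurry v)) fun u => by
      convert hf A hA hdet (ω + u • v) using 2 <;> ext ⟨i, r⟩ <;> simp [mulVec_add, mulVec_smul]
  simpa only [zero_smul, add_zero] using h

theorem IsSOInvariant.dirDeriv_mulVec_eq_zero (hf : IsSOInvariant f) {M : Matrix n n ℝ}
    (hM : Mᵀ = -M) (w : ι → n → ℝ) :
    dirDeriv f (Function.uncurry w) (Function.uncurry fun i => M *ᵥ w i) = 0 := by
  have hexp : HasDerivAt (fun u : ℝ => Function.uncurry fun i => NormedSpace.exp (u • M) *ᵥ w i)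
      (Function.uncurry fun i => M *ᵥ w i) 0 :=
    hasDerivAt_pi.2 fun p => hasDerivAt_pi.1 (hasDerivAt_exp_smul_mulVec M (w p.1)) p.2
  have hskew : ∀ u : ℝ, (u • M)ᵀ = -(u • M) := fun u => by rw [transpose_smul, hM, smul_neg]
  have h := dirDeriv_eq_of_eval_eq f hexp (hasDerivAt_const 0 (Function.uncurry w)) fun u =>
    hf _ (exp_mul_transpose_of_transpose_eq_neg (hskew u)) (det_exp_of_transpose_eq_neg (hskew u)) w
  simpa using h

/-- The dual part of the invariance under `Â = (1 + ε M) A₀`. -/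
theorem IsSOInvariant.dirDeriv_mulVec_add_skew (hf : IsSOInvariant f) {A M : Matrix n n ℝ}
    (hA : A * Aᵀ = 1) (hdet : A.det = 1) (hM : Mᵀ = -M) (ω v : ι → n → ℝ) :
    dirDeriv f (Function.uncurry fun i => A *ᵥ ω i)
        (Function.uncurry fun i => M *ᵥ (A *ᵥ ω i) + A *ᵥ v i)
      = dirDeriv f (Function.uncurry ω) (Function.uncurry v) := by
  have hsplit : (Function.uncurry fun i => M *ᵥ (A *ᵥ ω i) + A *ᵥ v i)
      = (Function.uncurry fun i => M *ᵥ (A *ᵥ ω i)) + Function.uncurry fun i => A *ᵥ v i := rfl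
  rw [hsplit, dirDeriv_add_right, hf.dirDeriv_mulVec_eq_zero hM, hf.dirDeriv_mulVec hA hdet,
    zero_add]

end SOInvariant

section DualMatrix

variable (A₀ A₁ B₀ B₁ : Matrix (Fin 3) (Fin 3) ℝ)

theorem dualMat_transpose : (dualMat A₀ A₁)ᵀ = dualMat A₀ᵀ A₁ᵀ := by
  simp [dualMat, transpose_map]

theorem dualMat_mul :
    dualMat A₀ A₁ * dualMat B₀ B₁ = dualMat (A₀ * B₀) (A₀ * B₁ + A₁ * B₀) := by
  simp only [dualMat, add_mul, mul_add, Matrix.map_mul, smul_mul_assoc, mul_smul_comm, smul_smul,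
    DualNumber.eps_mul_eps, zero_smul, add_zero, Matrix.map_add _ (map_add _), smul_add]
  abel

theorem dualMat_one_zero : dualMat 1 0 = 1 := by
  simp [dualMat]

theorem dualMat_inj : dualMat A₀ A₁ = dualMat B₀ B₁ ↔ A₀ = B₀ ∧ A₁ = B₁ := by
  refine ⟨fun h => ⟨?_, ?_⟩, fun ⟨h₀, h₁⟩ => h₀ ▸ h₁ ▸ rfl⟩ <;> ext i j
  · simpa [dualMat, TrivSqZeroExt.algebraMap_eq_inl] using congrArg (fun M => (M i j).fst) h
  · simpa [dualMat, TrivSqZeroExt.algebraMap_eq_inl] using congrArg (fun M => (M i j).snd) h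

theorem dualMat_mul_transpose_eq_one_iff :
    dualMat A₀ A₁ * (dualMat A₀ A₁)ᵀ = 1 ↔ A₀ * A₀ᵀ = 1 ∧ A₀ * A₁ᵀ + A₁ * A₀ᵀ = 0 := by
  rw [dualMat_transpose, dualMat_mul, ← dualMat_one_zero, dualMat_inj]

theorem fst_det_dualMat : (dualMat A₀ A₁).det.fst = A₀.det := by
  rw [← TrivSqZeroExt.fstHom_apply ℝ, AlgHom.map_det]
  congr
  ext i j
  simp [dualMat, TrivSqZeroExt.algebraMap_eq_inl]

end DualMatrix

theorem fhat_eq_dirDeriv {k : ℕ} (f : MvPolynomial (Fin k × Fin 3) ℝ) (ω v : Fin k → Fin 3 → ℝ) :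
    fhat f ω v = algebraMap ℝ (DualNumber ℝ) (eval (Function.uncurry ω) f) + DualNumber.eps *
      algebraMap ℝ (DualNumber ℝ) (dirDeriv f (Function.uncurry ω) (Function.uncurry v)) := by
  rw [fhat, dirDeriv, Fintype.sum_prod_type]
  rfl

/-- The dualisation of a `k`-fold invariant of `SO(3)` is a dual `k`-fold invariant
of `SO(3,𝔻)`: for any dual matrix `Â = A₀ + ε·A₁` with `Â·Âᵀ = I` and `det Â = 1`,
`f̂(Â·û₁,…,Â·û_k) = f̂(û₁,…,û_k)`, where `Â·ûᵢ` has primal part `A₀ωᵢ` and dual part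
`A₁ωᵢ + A₀vᵢ`. -/
theorem fhat_invariant_of_SO3_invariant {k : ℕ}
    (f : MvPolynomial (Fin k × Fin 3) ℝ)
    (hf : ∀ A : Matrix (Fin 3) (Fin 3) ℝ, A * Aᵀ = 1 → A.det = 1 →
      ∀ ω : Fin k → Fin 3 → ℝ,
        MvPolynomial.eval (fun p => A.mulVec (ω p.1) p.2) f
          = MvPolynomial.eval (fun p => ω p.1 p.2) f)
    (A₀ A₁ : Matrix (Fin 3) (Fin 3) ℝ)
    (hA : dualMat A₀ A₁ * (dualMat A₀ A₁)ᵀ = 1)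
    (hdet : (dualMat A₀ A₁).det = 1)
    (ω v : Fin k → Fin 3 → ℝ) :
    fhat f (fun i => A₀.mulVec (ω i)) (fun i => A₁.mulVec (ω i) + A₀.mulVec (v i))
      = fhat f ω v := by
  have hSO : IsSOInvariant f := hf
  obtain ⟨hA₀, hA₁⟩ := (dualMat_mul_transpose_eq_one_iff A₀ A₁).1 hA
  have hdet₀ : A₀.det = 1 := by simpa [fst_det_dualMat] using congrArg TrivSqZeroExt.fst hdet
  have hM : (A₁ * A₀ᵀ)ᵀ = -(A₁ * A₀ᵀ) := by
    rw [transpose_mul, transpose_transpose]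
    exact eq_neg_of_add_eq_zero_left hA₁
  have hA₁M : ∀ w : Fin 3 → ℝ, A₁ *ᵥ w = (A₁ * A₀ᵀ) *ᵥ (A₀ *ᵥ w) := fun w => by
    rw [mulVec_mulVec, Matrix.mul_assoc, mul_eq_one_comm.1 hA₀, Matrix.mul_one]
  simp only [hA₁M]
  rw [fhat_eq_dirDeriv, fhat_eq_dirDeriv, hSO A₀ hA₀ hdet₀ ω,
    hSO.dirDeriv_mulVec_add_skew hA₀ hdet₀ hM]
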